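/- Let a, b, c ∈ Aut(X*) be defined by the wreath recursion a = σ(c,b), b = (b,b), c = (a,a). Then b = 1, a and c commute, and G = ⟨a,b,c⟩ = ⟨a,c⟩ is free abelian of rank 2: the relation aᵐcⁿ = 1 holds only for m = n = 0, so the map ℤ² → G, (m,n) ↦ aᵐcⁿ, is a group isomorphism. -/

import Mathlib

/-!
Since `b = (b, b)`, the automorphism `b` is trivial, so `a = σ(c, 1)` and `c = (a, a)`; a check
on words then shows that `a` and `c` commute, and `a² = (c, c)`. If `aᵐcⁿ = 1`, then `m` is even,
because `cⁿ` fixes the word `0` while every odd power of `a` maps it to `1`. Writing `m = 2k`, the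
section of `aᵐcⁿ` at `0` is `cᵏaⁿ`, so `aⁿcᵏ = 1` is a new relation with smaller weight
`2|m| + 3|n|`; descent gives `m = n = 0`.
-/

/-- `WRec s f f₀ f₁` says that the tree automorphism `f` of the binary rooted tree
`X* = List Bool` is given by the wreath recursion `f = σˢ(f₀, f₁)`:
the root permutation of `f` is the transposition `σ` when `s = true` and is trivial when
`s = false`, the section of `f` at the letter `0 = false` is `f₀`, and the section of `f`
at the letter `1 = true` is `f₁`. -/
def WRec (s : Bool) (f f₀ f₁ : Equiv.Perm (List Bool)) : Prop :=
  f [] = [] ∧ (∀ w : List Bool, f (false :: w) = s :: f₀ w) ∧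
    (∀ w : List Bool, f (true :: w) = (!s) :: f₁ w)

open Equiv

namespace WRec

theorem eq_one_of_self {b : Perm (List Bool)} (hb : WRec false b b b) : b = 1 := by
  ext1 w
  induction w with
  | nil => exact hb.1
  | cons x t ih =>
    rw [Perm.one_apply] at ih
    cases x <;> simp [hb.2.1, hb.2.2, ih]

theorem mul {f f₀ f₁ g g₀ g₁ : Perm (List Bool)} (hf : WRec false f f₀ f₁)
    (hg : WRec false g g₀ g₁) : WRec false (f * g) (f₀ * g₀) (f₁ * g₁) :=
  ⟨by simp [hf.1, hg.1], fun w => by simp [hf.2.1, hg.2.1], fun w => by simp [hf.2.2, hg.2.2]⟩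

theorem inv {f f₀ f₁ : Perm (List Bool)} (hf : WRec false f f₀ f₁) :
    WRec false f⁻¹ f₀⁻¹ f₁⁻¹ :=
  ⟨by rw [Perm.inv_eq_iff_eq, hf.1],
    fun w => Perm.inv_eq_iff_eq.mpr (by simp [hf.2.1]),
    fun w => Perm.inv_eq_iff_eq.mpr (by simp [hf.2.2])⟩

theorem zpow {f f₀ f₁ : Perm (List Bool)} (hf : WRec false f f₀ f₁) (k : ℤ) :
    WRec false (f ^ k) (f₀ ^ k) (f₁ ^ k) := by
  induction k using Int.induction_on with
  | zero => exact ⟨rfl, fun _ => rfl, fun _ => rfl⟩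
  | succ i ih => simpa only [zpow_add_one] using ih.mul hf
  | pred i ih => simpa only [zpow_sub_one] using ih.mul hf.inv

end WRec

section

variable {a c : Perm (List Bool)} (ha : WRec true a c 1) (hc : WRec false c a a)
include ha hc

theorem commute_of_wrec : Commute a c := by
  ext1 w
  induction w with
  | nil => simp [ha.1, hc.1]
  | cons x t ih =>
    simp only [Perm.mul_apply] at ih ⊢
    cases x <;> simp [ha.2.1, ha.2.2, hc.2.1, hc.2.2, ih]

omit hc in
theorem wrec_sq : WRec false (a ^ 2) c c :=
  ⟨by simp [sq, ha.1], fun w => by simp [sq, ha.2.1, ha.2.2],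
    fun w => by simp [sq, ha.2.1, ha.2.2]⟩

theorem even_of_zpow_mul_zpow_eq_one {m n : ℤ} (h : a ^ m * c ^ n = 1) : Even m := by
  by_contra hodd
  obtain ⟨k, rfl⟩ := Int.not_even_iff_odd.mp hodd
  have hfix : (a ^ (2 * k + 1) * c ^ n) [false] = [false] := by rw [h]; rfl
  have hsq := wrec_sq ha |>.zpow k
  have ha0 : (a ^ n) [] = [] := Perm.zpow_apply_eq_self_of_apply_eq_self ha.1 n
  rw [zpow_add_one, zpow_mul, zpow_ofNat] at hfix
  simp [(hc.zpow n).2.1, ha0, ha.2.1, hc.1, hsq.2.2, (hc.zpow k).1] at hfix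

theorem zpow_mul_zpow_eq_one_of_double {k n : ℤ} (h : a ^ (k + k) * c ^ n = 1) :
    a ^ n * c ^ k = 1 := by
  rw [((commute_of_wrec ha hc).zpow_zpow n k).eq]
  ext1 w
  have hw : (a ^ (k + k) * c ^ n) (false :: w) = false :: w := by rw [h]; rfl
  rw [← two_mul, zpow_mul, zpow_ofNat] at hw
  simpa [(hc.zpow n).2.1, ((wrec_sq ha).zpow k).2.1] using hw

theorem eq_zero_of_zpow_mul_zpow_eq_one (m n : ℤ) (h : a ^ m * c ^ n = 1) : m = 0 ∧ n = 0 := by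
  obtain ⟨k, rfl⟩ := even_of_zpow_mul_zpow_eq_one ha hc h
  by_cases hkn : k = 0 ∧ n = 0
  · omega
  have := eq_zero_of_zpow_mul_zpow_eq_one n k (zpow_mul_zpow_eq_one_of_double ha hc h)
  omega
termination_by 2 * m.natAbs + 3 * n.natAbs
decreasing_by omega

end

namespace Commute

variable {G : Type*} [Group G] {a c : G}

def zpowZpowHom (hac : Commute a c) : Multiplicative (ℤ × ℤ) →* G :=
  MonoidHom.mk' (fun p => a ^ p.toAdd.1 * c ^ p.toAdd.2) fun p q => by
    simp only [toAdd_mul, Prod.fst_add, Prod.snd_add, zpow_add]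
    exact (hac.zpow_zpow _ _).mul_mul_mul_comm _ _

theorem range_zpowZpowHom (hac : Commute a c) :
    hac.zpowZpowHom.range = Subgroup.closure {a, c} := by
  apply le_antisymm
  · rintro _ ⟨p, rfl⟩
    exact mul_mem (zpow_mem (Subgroup.subset_closure (by simp)) _)
      (zpow_mem (Subgroup.subset_closure (by simp)) _)
  · rw [Subgroup.closure_le]
    rintro x (rfl | rfl)
    · exact ⟨Multiplicative.ofAdd (1, 0), by simp [zpowZpowHom]⟩
    · exact ⟨Multiplicative.ofAdd (0, 1), by simp [zpowZpowHom]⟩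

theorem injective_zpowZpowHom (hac : Commute a c)
    (hfree : ∀ m n : ℤ, a ^ m * c ^ n = 1 → m = 0 ∧ n = 0) :
    Function.Injective hac.zpowZpowHom := by
  refine (injective_iff_map_eq_one _).mpr fun p hp => ?_
  obtain ⟨h₁, h₂⟩ := hfree _ _ hp
  exact toAdd_eq_zero.mp (Prod.ext h₁ h₂)

theorem exists_mulEquiv_closure_pair (hac : Commute a c)
    (hfree : ∀ m n : ℤ, a ^ m * c ^ n = 1 → m = 0 ∧ n = 0) :
    ∃ e : Multiplicative (ℤ × ℤ) ≃* Subgroup.closure {a, c},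
      ∀ p : ℤ × ℤ, (e (Multiplicative.ofAdd p) : G) = a ^ p.1 * c ^ p.2 :=
  ⟨(MonoidHom.ofInjective (hac.injective_zpowZpowHom hfree)).trans
    (MulEquiv.subgroupCongr hac.range_zpowZpowHom), fun _ => rfl⟩

end Commute

theorem generates_free_abelian_of_rank_two (a b c : Equiv.Perm (List Bool))
    (ha : WRec true a c b) (hb : WRec false b b b) (hc : WRec false c a a) :
    b = 1 ∧
    a * c = c * a ∧
    Subgroup.closure {a, b, c} = Subgroup.closure {a, c} ∧
    (∀ m n : ℤ, a ^ m * c ^ n = 1 → m = 0 ∧ n = 0) ∧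
    ∃ e : Multiplicative (ℤ × ℤ) ≃* Subgroup.closure {a, b, c},
      ∀ p : ℤ × ℤ,
        (e (Multiplicative.ofAdd p) : Equiv.Perm (List Bool)) = a ^ p.1 * c ^ p.2 := by
  obtain rfl := hb.eq_one_of_self
  have hcomm : Commute a c := commute_of_wrec ha hc
  have hfree := eq_zero_of_zpow_mul_zpow_eq_one ha hc
  have hclosure : Subgroup.closure {a, 1, c} = Subgroup.closure {a, c} := by
    rw [Set.insert_comm, Subgroup.closure_insert_one]
  obtain ⟨e, he⟩ := hcomm.exists_mulEquiv_closure_pair hfree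
  exact ⟨rfl, hcomm.eq, hclosure, hfree, e.trans (MulEquiv.subgroupCongr hclosure.symm), he⟩
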